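/- Let ℰ act on a qubit by ℰ(ρ) = ∑_{i=0}^{3} pᵢ σᵢ ρ σᵢ with pᵢ ≥ 0, ∑pᵢ = 1, and p₀ ≥ p₁ ≥ p₂ ≥ p₃ (generalized depolarizing channel). Its affine matrix is Λ = diag(λ₁, λ₂, λ₃) with λ₁ = p₀+p₁−p₂−p₃, λ₂ = p₀−p₁+p₂−p₃, λ₃ = p₀−p₁−p₂+p₃ and t = 0, and its quantumness is Q(ℰ) = (λ₂² + λ₃²)/2 = (p₀ − p₁)² + (p₂ − p₃)². -/

import Mathlib

open Matrix Complex

noncomputable def pauli4 : Fin 4 → Matrix (Fin 2) (Fin 2) ℂ :=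
  ![1, !![0, 1; 1, 0], !![0, -I; I, 0], !![1, 0; 0, -1]]

/-- `μ` lists the eigenvalues of the real symmetric 3×3 matrix `M` in nonincreasing
order, via an orthogonal diagonalization `M = Oᵀ (diag μ) O`. -/
def EigOrdered (M : Matrix (Fin 3) (Fin 3) ℝ) (μ : Fin 3 → ℝ) : Prop :=
  (∃ O : Matrix (Fin 3) (Fin 3) ℝ, Oᵀ * O = 1 ∧ M = Oᵀ * Matrix.diagonal μ * O) ∧
  μ 1 ≤ μ 0 ∧ μ 2 ≤ μ 1

/-! Conjugation by `σᵢ` fixes `σⱼ` when the two commute (`i = 0`, `j = 0` or `i = j`) and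
negates it when they anticommute. Hence the Pauli channel is diagonal in the Pauli basis, scaling
`σⱼ` by `∑ᵢ ±pᵢ`; this gives `Λ = diag(λ₁, λ₂, λ₃)` and `t = 0`. The matrix `ΛΛᵀ/2` is then already
diagonal, and its entries `λⱼ²/2` are ordered because `λ₁ ± λ₂` and `λ₂ ± λ₃` are nonnegative
multiples of differences of consecutive `pᵢ`. -/

def pauliSign (i j : Fin 4) : ℝ := if i = 0 ∨ j = 0 ∨ i = j then 1 else -1

theorem pauli4_conj (i j : Fin 4) :
    pauli4 i * pauli4 j * pauli4 i = (pauliSign i j : ℂ) • pauli4 j := by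
  fin_cases i <;> fin_cases j <;> ext a b <;> fin_cases a <;> fin_cases b <;>
    simp [pauli4, pauliSign, Matrix.mul_apply, Fin.sum_univ_two]

noncomputable def pauliChannel (p : Fin 4 → ℝ) :
    Matrix (Fin 2) (Fin 2) ℂ →ₗ[ℂ] Matrix (Fin 2) (Fin 2) ℂ :=
  ∑ i, (p i : ℂ) • (LinearMap.mulLeft ℂ (pauli4 i) ∘ₗ LinearMap.mulRight ℂ (pauli4 i))

theorem pauliChannel_apply (p : Fin 4 → ℝ) (ρ : Matrix (Fin 2) (Fin 2) ℂ) :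
    pauliChannel p ρ = ∑ i, (p i : ℂ) • (pauli4 i * ρ * pauli4 i) := by
  simp [pauliChannel, mul_assoc]

def pauliChannelEigenvalue (p : Fin 4 → ℝ) (j : Fin 4) : ℝ := ∑ i, p i * pauliSign i j

theorem pauliChannel_pauli4 (p : Fin 4 → ℝ) (j : Fin 4) :
    pauliChannel p (pauli4 j) = (pauliChannelEigenvalue p j : ℂ) • pauli4 j := by
  simp only [pauliChannel_apply, pauli4_conj, smul_smul, ← Finset.sum_smul, pauliChannelEigenvalue]
  push_cast
  rfl

theorem pauliChannelEigenvalue_zero (p : Fin 4 → ℝ) :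
    pauliChannelEigenvalue p 0 = ∑ i, p i := by
  simp [pauliChannelEigenvalue, pauliSign]

theorem pauliChannelEigenvalue_succ (p : Fin 4 → ℝ) :
    (fun k : Fin 3 => pauliChannelEigenvalue p k.succ) =
      ![p 0 + p 1 - p 2 - p 3, p 0 - p 1 + p 2 - p 3, p 0 - p 1 - p 2 + p 3] := by
  ext k
  fin_cases k <;> simp [pauliChannelEigenvalue, pauliSign, Fin.sum_univ_four] <;> ring

theorem pauliChannel_bloch (p : Fin 4 → ℝ) (hp : ∑ i, p i = 1) (r : Fin 3 → ℝ) :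
    pauliChannel p ((1/2 : ℂ) • (1 + ∑ k : Fin 3, (r k : ℂ) • pauli4 k.succ)) =
      (1/2 : ℂ) • (1 + ∑ k : Fin 3,
        ((pauliChannelEigenvalue p k.succ * r k : ℝ) : ℂ) • pauli4 k.succ) := by
  have h1 : (1 : Matrix (Fin 2) (Fin 2) ℂ) = pauli4 0 := rfl
  simp only [map_smul, map_add, map_sum, h1, pauliChannel_pauli4, smul_smul,
    pauliChannelEigenvalue_zero, hp, Complex.ofReal_one, one_smul, Complex.ofReal_mul, mul_comm]

theorem eigOrdered_diagonal (μ : Fin 3 → ℝ) (h10 : μ 1 ≤ μ 0) (h21 : μ 2 ≤ μ 1) :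
    EigOrdered (diagonal μ) μ :=
  ⟨⟨1, by simp, by simp⟩, h10, h21⟩

theorem half_smul_diagonal_mul_transpose {n : Type*} [Fintype n] [DecidableEq n] (l : n → ℝ) :
    (1/2 : ℝ) • (diagonal l * (diagonal l)ᵀ) = diagonal fun i => l i ^ 2 / 2 := by
  rw [diagonal_transpose, diagonal_mul_diagonal, ← diagonal_smul]
  congr 1
  ext i
  simp only [Pi.smul_apply, smul_eq_mul]
  ring

theorem half_sq_le_half_sq {a b : ℝ} (h₁ : -b ≤ a) (h₂ : a ≤ b) : a ^ 2 / 2 ≤ b ^ 2 / 2 :=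
  div_le_div_of_nonneg_right (sq_le_sq' h₁ h₂) zero_le_two

theorem stmt13_general (p : Fin 4 → ℝ) (hsum : ∑ i, p i = 1)
    (h01 : p 1 ≤ p 0) (h12 : p 2 ≤ p 1) (h23 : p 3 ≤ p 2)
    (E : Matrix (Fin 2) (Fin 2) ℂ → Matrix (Fin 2) (Fin 2) ℂ)
    (hE : ∀ ρ, E ρ = ∑ i, (p i : ℂ) • (pauli4 i * ρ * pauli4 i))
    (lam : Fin 3 → ℝ)
    (hlam : lam = ![p 0 + p 1 - p 2 - p 3, p 0 - p 1 + p 2 - p 3, p 0 - p 1 - p 2 + p 3]) :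
    (∀ r : Fin 3 → ℝ,
      E ((1/2 : ℂ) • (1 + ∑ i : Fin 3, (r i : ℂ) • pauli4 i.succ))
        = (1/2 : ℂ) • (1 + ∑ i : Fin 3, ((lam i * r i : ℝ) : ℂ) • pauli4 i.succ))
    ∧ EigOrdered ((1/2 : ℝ) • ((Matrix.diagonal lam) * (Matrix.diagonal lam)ᵀ))
        (fun i => lam i ^ 2 / 2)
    ∧ (lam 1 ^ 2 + lam 2 ^ 2) / 2 = (p 0 - p 1)^2 + (p 2 - p 3)^2 := by
  refine ⟨fun r => ?_, ?_, ?_⟩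
  · rw [hE, ← pauliChannel_apply, pauliChannel_bloch p hsum, hlam,
      ← pauliChannelEigenvalue_succ]
  · rw [half_smul_diagonal_mul_transpose]
    subst hlam
    refine eigOrdered_diagonal _ (half_sq_le_half_sq ?_ ?_) (half_sq_le_half_sq ?_ ?_) <;>
      simp only [cons_val_zero, cons_val_one, cons_val] <;> linarith
  · simp only [hlam, cons_val_one, cons_val]
    ring

/-- The generalized depolarizing channel `ρ ↦ ∑ pᵢ σᵢ ρ σᵢ` (with
`p₀ ≥ p₁ ≥ p₂ ≥ p₃`) has affine representation `Λ = diag(λ₁,λ₂,λ₃)`, `t = 0`,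
and quantumness `(λ₂² + λ₃²)/2 = (p₀ − p₁)² + (p₂ − p₃)²`. -/
theorem stmt13 (p : Fin 4 → ℝ) (hp : ∀ i, 0 ≤ p i) (hsum : ∑ i, p i = 1)
    (h01 : p 1 ≤ p 0) (h12 : p 2 ≤ p 1) (h23 : p 3 ≤ p 2)
    (E : Matrix (Fin 2) (Fin 2) ℂ → Matrix (Fin 2) (Fin 2) ℂ)
    (hE : ∀ ρ, E ρ = ∑ i, (p i : ℂ) • (pauli4 i * ρ * pauli4 i))
    (lam : Fin 3 → ℝ)
    (hlam : lam = ![p 0 + p 1 - p 2 - p 3, p 0 - p 1 + p 2 - p 3, p 0 - p 1 - p 2 + p 3]) :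
    (∀ r : Fin 3 → ℝ,
      E ((1/2 : ℂ) • (1 + ∑ i : Fin 3, (r i : ℂ) • pauli4 i.succ))
        = (1/2 : ℂ) • (1 + ∑ i : Fin 3, ((lam i * r i : ℝ) : ℂ) • pauli4 i.succ))
    ∧ EigOrdered ((1/2 : ℝ) • ((Matrix.diagonal lam) * (Matrix.diagonal lam)ᵀ))
        (fun i => lam i ^ 2 / 2)
    ∧ (lam 1 ^ 2 + lam 2 ^ 2) / 2 = (p 0 - p 1)^2 + (p 2 - p 3)^2 :=
  stmt13_general p hsum h01 h12 h23 E hE lam hlam
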